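/- (Deterministic MATR guarantee.) Under the setup of the weak-assortativity lemma: S symmetric weakly assortative with gap p_gap and true normalized clustering matrix X₀ with minimum cluster proportion π_min; let Ŝ = S + R; let τ = n·π_min·p_gap. Let Λ = {λ₁,…,λ_T} be a finite set and, for each λ, let X̂_λ be a normalized clustering matrix of a partition into r clusters. Suppose there exists λ₀ ∈ Λ with ⟨Ŝ, X̂_{λ₀}⟩ ≥ ⟨S, X₀⟩ − ε. Then the maximizer λ* = argmax_{λ∈Λ} ⟨Ŝ, X̂_λ⟩ satisfies ‖X̂_{λ*} − X₀‖_F² ≤ (2/τ)·(ε + sup_{X ∈ 𝒳_r} |⟨X, R⟩|), where 𝒳_r is the set of all normalized clustering matrices of partitions of {1,…,n} into r clusters. -/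

import Mathlib

open Matrix BigOperators

/-- Frobenius norm of a real matrix. -/
noncomputable def frob {n m : ℕ} (M : Matrix (Fin n) (Fin m) ℝ) : ℝ :=
  Real.sqrt (∑ i, ∑ j, (M i j) ^ 2)

/-- Membership matrix of the partition given by a cluster assignment `c`. -/
noncomputable def memb {n r : ℕ} (c : Fin n → Fin r) : Matrix (Fin n) (Fin r) ℝ :=
  Matrix.of fun i k => if c i = k then 1 else 0

/-- Normalized clustering matrix `Z (ZᵀZ)⁻¹ Zᵀ` of the assignment `c`. -/
noncomputable def ncm {n r : ℕ} (c : Fin n → Fin r) : Matrix (Fin n) (Fin n) ℝ :=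
  memb c * ((memb c)ᵀ * memb c)⁻¹ * (memb c)ᵀ

/-- Trace inner product `⟨M, N⟩ = trace(MᵀN)`. -/
noncomputable def ip {n : ℕ} (M N : Matrix (Fin n) (Fin n) ℝ) : ℝ :=
  (Mᵀ * N).trace

/-- The set of all normalized clustering matrices of partitions of `{1,…,n}` into `r` clusters. -/
def clusterMatrices (n r : ℕ) : Set (Matrix (Fin n) (Fin n) ℝ) :=
  {X | ∃ c : Fin n → Fin r, Function.Surjective c ∧ X = ncm c}

/-!
Let `w i` be the mass that row `i` of a clustering matrix `X` puts outside the true cluster of `i`.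
Since the rows of `X` and `X₀` sum to one and `S` is constant on the diagonal blocks, weak
assortativity gives `⟨S, X₀⟩ - ⟨S, X⟩ ≥ p_gap ∑ w i`. On the other hand
`r - ⟨X₀, X⟩ = ∑ w i / n_{c₀ i} ≤ ∑ w i / (n π_min)`, and `‖X - X₀‖² ≤ 2 (r - ⟨X₀, X⟩)` because
both matrices have squared Frobenius norm `r`; hence `τ/2 ‖X - X₀‖² ≤ ⟨S, X₀⟩ - ⟨S, X⟩`.
For `X = X̂_{λ*}`, maximality of `λ*` and the hypothesis on `λ₀` bound the right-hand side by
`ε + |⟨X̂_{λ*}, R⟩|`.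
-/

open Finset

variable {n r : ℕ}

def cluster (c : Fin n → Fin r) (k : Fin r) : Finset (Fin n) :=
  univ.filter fun i => c i = k

theorem ip_eq_sum (M N : Matrix (Fin n) (Fin n) ℝ) : ip M N = ∑ i, ∑ j, M i j * N i j := by
  rw [ip, trace, sum_comm]
  simp [mul_apply]

theorem ip_comm (M N : Matrix (Fin n) (Fin n) ℝ) : ip M N = ip N M := by
  rw [ip, ip, ← trace_transpose, transpose_mul, transpose_transpose]

theorem ip_add_left (M N X : Matrix (Fin n) (Fin n) ℝ) : ip (M + N) X = ip M X + ip N X := by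
  simp [ip, add_mul]

theorem frob_sq (M : Matrix (Fin n) (Fin n) ℝ) : frob M ^ 2 = ip M M := by
  rw [frob, Real.sq_sqrt (by positivity), ip_eq_sum]
  simp [sq]

theorem frob_sub_sq (X Y : Matrix (Fin n) (Fin n) ℝ) :
    frob (X - Y) ^ 2 = ip X X + ip Y Y - 2 * ip Y X := by
  rw [frob_sq, ip_comm Y X]
  simp only [ip, transpose_sub, sub_mul, mul_sub, trace_sub]
  rw [← trace_transpose (Yᵀ * X), transpose_mul, transpose_transpose]
  ring

section ClusterMatrix

variable {c : Fin n → Fin r}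

theorem card_cluster_pos (hc : Function.Surjective c) (k : Fin r) : (0 : ℝ) < #(cluster c k) := by
  obtain ⟨i, rfl⟩ := hc k
  exact Nat.cast_pos.2 (card_pos.2 ⟨i, by simp [cluster]⟩)

theorem sum_comp_eq_sum_card_cluster_mul (c : Fin n → Fin r) (f : Fin r → ℝ) :
    ∑ i, f (c i) = ∑ k, #(cluster c k) * f k := by
  rw [← sum_fiberwise univ c]
  refine sum_congr rfl fun k _ => ?_
  rw [sum_congr rfl fun i hi => by rw [(mem_filter.1 hi).2], sum_const, nsmul_eq_mul]
  rfl

theorem sum_inv_card_cluster (hc : Function.Surjective c) :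
    ∑ i, (#(cluster c (c i)) : ℝ)⁻¹ = r := by
  rw [sum_comp_eq_sum_card_cluster_mul c fun k => (#(cluster c k) : ℝ)⁻¹]
  simp [mul_inv_cancel₀ (card_cluster_pos hc _).ne']

theorem memb_transpose_mul_memb (c : Fin n → Fin r) :
    (memb c)ᵀ * memb c = diagonal fun k => (#(cluster c k) : ℝ) := by
  ext k l
  simp only [mul_apply, memb, transpose_apply, of_apply, boole_mul, ← ite_and, diagonal_apply]
  split_ifs with hkl
  · simp [hkl, cluster]
  · exact sum_eq_zero fun i _ => if_neg fun h => hkl (h.1.symm.trans h.2)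

theorem ncm_apply (hc : Function.Surjective c) (i j : Fin n) :
    ncm c i j = if c i = c j then (#(cluster c (c i)) : ℝ)⁻¹ else 0 := by
  have hinv : ((memb c)ᵀ * memb c)⁻¹ = diagonal fun k => (#(cluster c k) : ℝ)⁻¹ := by
    rw [memb_transpose_mul_memb]
    refine inv_eq_right_inv ?_
    rw [diagonal_mul_diagonal, ← diagonal_one]
    exact congrArg diagonal (funext fun k => mul_inv_cancel₀ (card_cluster_pos hc k).ne')
  rw [ncm, hinv]
  simp only [mul_apply, memb, of_apply, transpose_apply, boole_mul, sum_ite_eq, mem_univ,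
    if_true, diagonal_apply, mul_boole]

theorem ncm_nonneg (hc : Function.Surjective c) (i j : Fin n) : 0 ≤ ncm c i j := by
  rw [ncm_apply hc]
  split_ifs <;> positivity

theorem sum_ncm_mul (hc : Function.Surjective c) (i : Fin n) (f : Fin n → ℝ) :
    ∑ j, ncm c i j * f j = (#(cluster c (c i)) : ℝ)⁻¹ * ∑ j ∈ cluster c (c i), f j := by
  simp only [ncm_apply hc, ite_mul, zero_mul, sum_ite, sum_const_zero, add_zero, mul_sum,
    cluster, eq_comm]

theorem ncm_row_sum (hc : Function.Surjective c) (i : Fin n) : ∑ j, ncm c i j = 1 := by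
  simpa [(card_cluster_pos hc (c i)).ne'] using sum_ncm_mul hc i 1

theorem ip_ncm_self (hc : Function.Surjective c) : ip (ncm c) (ncm c) = r := by
  have hrow : ∀ i, ∑ j, ncm c i j * ncm c i j = (#(cluster c (c i)) : ℝ)⁻¹ := fun i => by
    rw [sum_ncm_mul hc,
      sum_congr rfl fun j hj => by rw [ncm_apply hc, if_pos (mem_filter.1 hj).2.symm], sum_const,
      nsmul_eq_mul, mul_inv_cancel₀ (card_cluster_pos hc _).ne', mul_one]
  rw [ip_eq_sum, sum_congr rfl fun i _ => hrow i, sum_inv_card_cluster hc]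

theorem clusterMatrices_finite : (clusterMatrices n r).Finite :=
  (Set.finite_range ncm).subset fun _ ⟨c, _, hX⟩ => ⟨c, hX.symm⟩

end ClusterMatrix

def offBlockMass (c : Fin n → Fin r) (X : Matrix (Fin n) (Fin n) ℝ) (i : Fin n) : ℝ :=
  ∑ j ∈ (cluster c (c i))ᶜ, X i j

section WeakAssortativity

variable {c0 : Fin n → Fin r} {X : Matrix (Fin n) (Fin n) ℝ}

theorem offBlockMass_nonneg (hX : ∀ i j, 0 ≤ X i j) (i : Fin n) : 0 ≤ offBlockMass c0 X i :=
  sum_nonneg fun j _ => hX i j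

theorem sum_cluster_add_offBlockMass (hX : ∀ i, ∑ j, X i j = 1) (i : Fin n) :
    ∑ j ∈ cluster c0 (c0 i), X i j + offBlockMass c0 X i = 1 :=
  (sum_add_sum_compl _ _).trans (hX i)

theorem gap_mul_sum_offBlockMass_le (hc0 : Function.Surjective c0)
    {S : Matrix (Fin n) (Fin n) ℝ} {a : Fin r → ℝ} {pgap : ℝ}
    (hblock : ∀ i j, c0 i = c0 j → S i j = a (c0 i))
    (hassort : ∀ i j, c0 i ≠ c0 j → S i j ≤ a (c0 i) - pgap)
    (hX_nonneg : ∀ i j, 0 ≤ X i j) (hX_row : ∀ i, ∑ j, X i j = 1) :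
    pgap * ∑ i, offBlockMass c0 X i ≤ ip S (ncm c0) - ip S X := by
  have hrow (i : Fin n) : pgap * offBlockMass c0 X i ≤ ∑ j, S i j * (ncm c0 i j - X i j) := by
    have hterm (j : Fin n) : a (c0 i) * (ncm c0 i j - X i j)
        + pgap * (if j ∈ (cluster c0 (c0 i))ᶜ then X i j else 0)
        ≤ S i j * (ncm c0 i j - X i j) := by
      by_cases h : c0 i = c0 j
      · simp [hblock i j h, cluster, h]
      · have hX0 : ncm c0 i j = 0 := by rw [ncm_apply hc0, if_neg h]
        simp only [mem_compl, cluster, mem_filter, mem_univ, true_and, Ne.symm h, not_false_eq_true,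
          if_true, hX0]
        nlinarith [hassort i j h, hX_nonneg i j]
    calc pgap * offBlockMass c0 X i
        = ∑ j, (a (c0 i) * (ncm c0 i j - X i j)
            + pgap * (if j ∈ (cluster c0 (c0 i))ᶜ then X i j else 0)) := by
          rw [sum_add_distrib, ← mul_sum, ← mul_sum, sum_sub_distrib, ncm_row_sum hc0, hX_row,
            sum_ite_mem, univ_inter, offBlockMass, sub_self, mul_zero, zero_add]
      _ ≤ ∑ j, S i j * (ncm c0 i j - X i j) := sum_le_sum fun j _ => hterm j
  calc pgap * ∑ i, offBlockMass c0 X i ≤ ∑ i, ∑ j, S i j * (ncm c0 i j - X i j) := by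
        rw [mul_sum]
        exact sum_le_sum fun i _ => hrow i
    _ = ip S (ncm c0) - ip S X := by
        simp only [ip_eq_sum, mul_sub, sum_sub_distrib]

theorem mul_sub_ip_ncm_le (hc0 : Function.Surjective c0) {m : ℝ}
    (hm : ∀ k, m ≤ #(cluster c0 k)) (hX_nonneg : ∀ i j, 0 ≤ X i j)
    (hX_row : ∀ i, ∑ j, X i j = 1) :
    m * (r - ip (ncm c0) X) ≤ ∑ i, offBlockMass c0 X i := by
  have hsub : r - ip (ncm c0) X = ∑ i, (#(cluster c0 (c0 i)) : ℝ)⁻¹ * offBlockMass c0 X i := by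
    rw [ip_eq_sum, ← sum_inv_card_cluster hc0, ← sum_sub_distrib]
    refine sum_congr rfl fun i _ => ?_
    rw [sum_ncm_mul hc0]
    linear_combination (-(#(cluster c0 (c0 i)) : ℝ)⁻¹) * sum_cluster_add_offBlockMass hX_row i
  rw [hsub, mul_sum]
  refine sum_le_sum fun i _ => ?_
  have hle : m * (#(cluster c0 (c0 i)) : ℝ)⁻¹ ≤ 1 :=
    mul_inv_le_one_of_le₀ (hm _) (card_cluster_pos hc0 _).le
  calc m * ((#(cluster c0 (c0 i)) : ℝ)⁻¹ * offBlockMass c0 X i)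
      = m * (#(cluster c0 (c0 i)) : ℝ)⁻¹ * offBlockMass c0 X i := (mul_assoc _ _ _).symm
    _ ≤ offBlockMass c0 X i := mul_le_of_le_one_left (offBlockMass_nonneg hX_nonneg i) hle

theorem gap_mul_frob_sq_le (hc0 : Function.Surjective c0)
    {S : Matrix (Fin n) (Fin n) ℝ} {a : Fin r → ℝ} {pgap m : ℝ}
    (hblock : ∀ i j, c0 i = c0 j → S i j = a (c0 i)) (hpgap : 0 ≤ pgap)
    (hassort : ∀ i j, c0 i ≠ c0 j → S i j ≤ a (c0 i) - pgap)
    (hm_nonneg : 0 ≤ m) (hm : ∀ k, m ≤ #(cluster c0 k))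
    (hX_nonneg : ∀ i j, 0 ≤ X i j) (hX_row : ∀ i, ∑ j, X i j = 1) (hX_sq : ip X X ≤ r) :
    pgap * m / 2 * frob (X - ncm c0) ^ 2 ≤ ip S (ncm c0) - ip S X := by
  have hfrob : frob (X - ncm c0) ^ 2 ≤ 2 * (r - ip (ncm c0) X) := by
    rw [frob_sub_sq, ip_ncm_self hc0]
    linarith
  calc pgap * m / 2 * frob (X - ncm c0) ^ 2
      ≤ pgap * m / 2 * (2 * (r - ip (ncm c0) X)) :=
        mul_le_mul_of_nonneg_left hfrob (by positivity)
    _ = pgap * (m * (r - ip (ncm c0) X)) := by ring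
    _ ≤ pgap * ∑ i, offBlockMass c0 X i :=
        mul_le_mul_of_nonneg_left (mul_sub_ip_ncm_le hc0 hm hX_nonneg hX_row) hpgap
    _ ≤ ip S (ncm c0) - ip S X := gap_mul_sum_offBlockMass_le hc0 hblock hassort hX_nonneg hX_row

end WeakAssortativity

theorem stmt14 {n r T : ℕ} (hn : 0 < n) (hr : 0 < r)
    (c0 : Fin n → Fin r) (hc0 : Function.Surjective c0)
    (S R : Matrix (Fin n) (Fin n) ℝ)
    (a : Fin r → ℝ)
    (hblock : ∀ i j, c0 i = c0 j → S i j = a (c0 i))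
    (pgap : ℝ) (hpgap : 0 < pgap)
    (hassort : ∀ i j, c0 i ≠ c0 j → S i j ≤ a (c0 i) - pgap)
    (clam : Fin T → (Fin n → Fin r)) (hclam : ∀ t, Function.Surjective (clam t))
    (ε : ℝ) (tstar : Fin T)
    (hmax : ∀ t, ip (S + R) (ncm (clam t)) ≤ ip (S + R) (ncm (clam tstar)))
    (hexists : ∃ t0 : Fin T, ip (S + R) (ncm (clam t0)) ≥ ip S (ncm c0) - ε) :
    (frob (ncm (clam tstar) - ncm c0)) ^ 2 ≤
      (2 / ((n : ℝ) *
        (Finset.univ.inf' (@Finset.univ_nonempty _ _ (Fin.pos_iff_nonempty.mp hr))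
          (fun k => ((Finset.univ.filter (fun i => c0 i = k)).card : ℝ) / n)) * pgap)) *
      (ε + sSup ((fun X => |ip X R|) '' clusterMatrices n r)) := by
  set m : ℝ := n * univ.inf' (@univ_nonempty _ _ (Fin.pos_iff_nonempty.mp hr))
    fun k => (#(univ.filter fun i => c0 i = k) : ℝ) / n
  have hn' : (0 : ℝ) < n := Nat.cast_pos.2 hn
  have hm_pos : 0 < m :=
    mul_pos hn' ((lt_inf'_iff _).2 fun k _ => div_pos (card_cluster_pos hc0 k) hn')
  have hm_le (k : Fin r) : m ≤ #(cluster c0 k) :=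
    calc m ≤ n * ((#(cluster c0 k) : ℝ) / n) :=
          mul_le_mul_of_nonneg_left (inf'_le _ (mem_univ k)) hn'.le
      _ = #(cluster c0 k) := mul_div_cancel₀ _ hn'.ne'
  have hR : ip R (ncm (clam tstar)) ≤ sSup ((fun X => |ip X R|) '' clusterMatrices n r) := by
    rw [ip_comm]
    exact (le_abs_self _).trans <| le_csSup (clusterMatrices_finite.image _).bddAbove
      ⟨_, ⟨clam tstar, hclam tstar, rfl⟩, rfl⟩
  obtain ⟨t0, ht0⟩ := hexists
  have hgap := gap_mul_frob_sq_le hc0 hblock hpgap.le hassort hm_pos.le hm_le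
    (ncm_nonneg (hclam tstar)) (ncm_row_sum (hclam tstar)) (ip_ncm_self (hclam tstar)).le
  rw [div_mul_eq_mul_div, le_div_iff₀ (mul_pos hm_pos hpgap)]
  linarith [hmax t0, ip_add_left S R (ncm (clam tstar))]
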